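/- arXiv:2003.09972 — 3 statements merged into one kernel-verified Lean document; each statement's English description precedes it below -/
import Mathlib

section
/- Fix real constants γ > 0 and δ > 0 and a sequence ξ : ℕ → [0,1). Define a coupled sequence (A_k, B_k, M_k) in ℕ³ recursively as follows, with Λ_k := max{γ(A_k+B_k)+δ·A_k·B_k, γ·M_k+δ·M_k²}: the state (0,0,0) is absorbing; otherwise, if A_k ≤ B_k, set (A_{k+1},B_{k+1}) = (A_k+1,B_k) if ξ_{k+1} ∈ [0, γA_k/Λ_k), (A_k,B_k+1) if ξ_{k+1} ∈ [γA_k/Λ_k, γ(A_k+B_k)/Λ_k), (A_k−1,B_k−1) if ξ_{k+1} ∈ [1−δA_kB_k/Λ_k, 1), and (A_k,B_k) otherwise; if A_k > B_k the roles of A_k and B_k in this rule are exchanged; in both cases set M_{k+1} = M_k+1 if ξ_{k+1} ∈ [0, γM_k/Λ_k), M_{k+1} = M_k−1 if ξ_{k+1} ∈ [1−δM_k²/Λ_k, 1), and M_{k+1} = M_k otherwise. Then, if M_0 = min{A_0, B_0}, for every k ∈ ℕ we have min{A_k, B_k} ≤ M_k. -/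
open Classical in
/-- One step of the discrete-time coupling of the A-B chain with the single-species
birth–death M chain. The state is `(A, B, M)`, `x` is the uniform random variable `ξ_{k+1}`. -/
noncomputable def abmStep (γ δ : ℝ) (s : ℕ × ℕ × ℕ) (x : ℝ) : ℕ × ℕ × ℕ :=
  let a := s.1
  let b := s.2.1
  let m := s.2.2
  if a = 0 ∧ b = 0 ∧ m = 0 then s
  else
    let Λ : ℝ := max (γ * ((a : ℝ) + (b : ℝ)) + δ * (a : ℝ) * (b : ℝ))
                     (γ * (m : ℝ) + δ * (m : ℝ) ^ 2)
    let ab : ℕ × ℕ :=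
      if a ≤ b then
        if x < γ * (a : ℝ) / Λ then (a + 1, b)
        else if x < γ * ((a : ℝ) + (b : ℝ)) / Λ then (a, b + 1)
        else if 1 - δ * (a : ℝ) * (b : ℝ) / Λ ≤ x then (a - 1, b - 1)
        else (a, b)
      else
        -- roles of A and B exchanged
        if x < γ * (b : ℝ) / Λ then (a, b + 1)
        else if x < γ * ((b : ℝ) + (a : ℝ)) / Λ then (a + 1, b)
        else if 1 - δ * (b : ℝ) * (a : ℝ) / Λ ≤ x then (a - 1, b - 1)
        else (a, b)
    let m' : ℕ :=
      if x < γ * (m : ℝ) / Λ then m + 1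
      else if 1 - δ * (m : ℝ) ^ 2 / Λ ≤ x then m - 1
      else m
    (ab.1, ab.2, m')

/-- The coupled trajectory: the `(k+1)`-th transition is driven by `ξ (k+1)`. -/
noncomputable def abmTraj (γ δ : ℝ) (ξ : ℕ → ℝ) (s0 : ℕ × ℕ × ℕ) : ℕ → ℕ × ℕ × ℕ
  | 0 => s0
  | k + 1 => abmStep γ δ (abmTraj γ δ ξ s0 k) (ξ (k + 1))

/-!
The invariant `min(A,B) ≤ M`, true at time `0`, is preserved by every step. The minimum of `A` and
`B` can only increase on `[0, γ min(A,B) / Λ)`, which is contained in the birth interval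
`[0, γ M / Λ)` of `M`. When `M = min(A,B)`, the death interval `[1 - δ M² / Λ, 1)` of `M` lies
inside the joint death interval `[1 - δ A B / Λ, 1)` of `A` and `B` (as `M² ≤ A B`) and, since
`γ (A + B) + δ M² ≤ Λ`, beyond both birth intervals.
-/

noncomputable def abmRate (γ δ : ℝ) (a b m : ℕ) : ℝ :=
  max (γ * ((a : ℝ) + (b : ℝ)) + δ * (a : ℝ) * (b : ℝ)) (γ * (m : ℝ) + δ * (m : ℝ) ^ 2)

lemma coupled_update_le {γ δ Λ x : ℝ} {a b m : ℕ} (hγ : 0 ≤ γ) (hδ : 0 ≤ δ)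
    (hm : min a b ≤ m) (hΛab : γ * (a + b) + δ * a * b ≤ Λ) (hΛm : γ * m + δ * m ^ 2 ≤ Λ) :
    (if x < γ * (min a b : ℕ) / Λ then min a b + 1
      else if x < γ * (a + b) / Λ then min a b
      else if 1 - δ * a * b / Λ ≤ x then min a b - 1
      else min a b) ≤
    (if x < γ * m / Λ then m + 1
      else if 1 - δ * m ^ 2 / Λ ≤ x then m - 1
      else m) := by
  have hΛ : 0 ≤ Λ := le_trans (by positivity) hΛm
  have hbirth : γ * (min a b : ℕ) / Λ ≤ γ * m / Λ := by gcongr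
  rcases hm.lt_or_eq with hlt | heq
  · split_ifs <;> first | omega | linarith
  have hsq : δ * m ^ 2 ≤ δ * a * b := by
    rw [mul_assoc, ← heq, Nat.cast_min, sq]
    gcongr <;> simp
  have hsep : γ * (a + b) / Λ ≤ 1 - δ * m ^ 2 / Λ := by
    rw [le_sub_iff_add_le, ← add_div]
    exact div_le_one_of_le₀ (by linarith) hΛ
  have hdeath : 1 - δ * a * b / Λ ≤ 1 - δ * m ^ 2 / Λ := by gcongr
  split_ifs <;> first | omega | linarith

section

variable {γ δ : ℝ}

lemma abmStep_snd_snd_of_ne_zero {a b m : ℕ} (x : ℝ) (h : ¬(a = 0 ∧ b = 0 ∧ m = 0)) :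
    (abmStep γ δ (a, b, m) x).2.2 =
      if x < γ * m / abmRate γ δ a b m then m + 1
      else if 1 - δ * m ^ 2 / abmRate γ δ a b m ≤ x then m - 1
      else m := by
  simp only [abmStep, if_neg h]
  rfl

-- Not an equality: when `a = b`, the birth of `a` leaves the minimum unchanged.
lemma min_abmStep_le_of_ne_zero {a b m : ℕ} (x : ℝ) (h : ¬(a = 0 ∧ b = 0 ∧ m = 0)) :
    min (abmStep γ δ (a, b, m) x).1 (abmStep γ δ (a, b, m) x).2.1 ≤
      if x < γ * (min a b : ℕ) / abmRate γ δ a b m then min a b + 1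
      else if x < γ * (a + b) / abmRate γ δ a b m then min a b
      else if 1 - δ * a * b / abmRate γ δ a b m ≤ x then min a b - 1
      else min a b := by
  simp only [abmStep, abmRate, if_neg h]
  rcases le_or_gt a b with hab | hba
  · simp only [if_pos hab, min_eq_left hab]
    split_ifs <;> dsimp only <;> omega
  · simp only [if_neg hba.not_ge, min_eq_right hba.le, add_comm (b : ℝ), mul_right_comm δ (b : ℝ)]
    split_ifs <;> dsimp only <;> omega

lemma min_le_abmStep (hγ : 0 ≤ γ) (hδ : 0 ≤ δ) {s : ℕ × ℕ × ℕ} (x : ℝ)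
    (hs : min s.1 s.2.1 ≤ s.2.2) :
    min (abmStep γ δ s x).1 (abmStep γ δ s x).2.1 ≤ (abmStep γ δ s x).2.2 := by
  obtain ⟨a, b, m⟩ := s
  by_cases h0 : a = 0 ∧ b = 0 ∧ m = 0
  · obtain ⟨rfl, rfl, rfl⟩ := h0
    simp [abmStep]
  rw [abmStep_snd_snd_of_ne_zero x h0]
  exact (min_abmStep_le_of_ne_zero x h0).trans
    (coupled_update_le hγ hδ hs (le_max_left _ _) (le_max_right _ _))

lemma min_le_abmTraj (hγ : 0 ≤ γ) (hδ : 0 ≤ δ) (ξ : ℕ → ℝ) {s₀ : ℕ × ℕ × ℕ}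
    (h₀ : min s₀.1 s₀.2.1 ≤ s₀.2.2) (k : ℕ) :
    min (abmTraj γ δ ξ s₀ k).1 (abmTraj γ δ ξ s₀ k).2.1 ≤ (abmTraj γ δ ξ s₀ k).2.2 := by
  induction k with
  | zero => exact h₀
  | succ k ih => exact min_le_abmStep hγ hδ _ ih

end

theorem abm_coupling_min_le_general (γ δ : ℝ) (hγ : 0 < γ) (hδ : 0 < δ)
    (ξ : ℕ → ℝ)
    (A B M : ℕ → ℕ)
    (hA : ∀ k, A k = (abmTraj γ δ ξ (A 0, B 0, M 0) k).1)
    (hB : ∀ k, B k = (abmTraj γ δ ξ (A 0, B 0, M 0) k).2.1)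
    (hM : ∀ k, M k = (abmTraj γ δ ξ (A 0, B 0, M 0) k).2.2)
    (hM0 : M 0 = min (A 0) (B 0)) :
    ∀ k : ℕ, min (A k) (B k) ≤ M k := by
  intro k
  rw [hA k, hB k, hM k]
  exact min_le_abmTraj hγ.le hδ.le ξ hM0.ge k

/-- In the coupled process, if `M 0 = min (A 0) (B 0)`, then
`min (A k) (B k) ≤ M k` for every `k`. -/
theorem abm_coupling_min_le (γ δ : ℝ) (hγ : 0 < γ) (hδ : 0 < δ)
    (ξ : ℕ → ℝ) (hξ : ∀ k, 0 ≤ ξ k ∧ ξ k < 1)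
    (A B M : ℕ → ℕ)
    (hA : ∀ k, A k = (abmTraj γ δ ξ (A 0, B 0, M 0) k).1)
    (hB : ∀ k, B k = (abmTraj γ δ ξ (A 0, B 0, M 0) k).2.1)
    (hM : ∀ k, M k = (abmTraj γ δ ξ (A 0, B 0, M 0) k).2.2)
    (hM0 : M 0 = min (A 0) (B 0)) :
    ∀ k : ℕ, min (A k) (B k) ≤ M k :=
  abm_coupling_min_le_general γ δ hγ hδ ξ A B M hA hB hM hM0
end

section
/- For every real α > 0 and every natural number M ≥ 1, the double series ∑_{j=1}^{M} ∑_{k=j−1}^{∞} α^{k−j+1} · (j−1)! / ((k+1)! · (k+1)) is at most e^{α} · π²/6. -/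
/-!
Since `(j-1)! · j = j!` and `j! · i! ≤ (j+i)!`, the `i`-th term of the `j`-th inner series is at
most `(α^i / i!) · (1 / j²)`. Summing over `i` gives `e^α / j²`, and summing over `j` gives at
most `e^α · ζ(2) = e^α π² / 6`.
-/

open Nat

theorem factorial_pred_mul_factorial_mul_sq_le {j : ℕ} (hj : 1 ≤ j) (i : ℕ) :
    (j - 1)! * i ! * j ^ 2 ≤ (j + i)! * (j + i) :=
  calc (j - 1)! * i ! * j ^ 2 = j * (j - 1)! * i ! * j := by ring
    _ = j ! * i ! * j := by rw [mul_factorial_pred (by omega)]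
    _ ≤ (j + i)! * (j + i) :=
      Nat.mul_le_mul
        (Nat.le_of_dvd (factorial_pos _) (factorial_mul_factorial_dvd_factorial_add _ _))
        (Nat.le_add_right j i)

theorem pow_mul_factorial_pred_div_le {α : ℝ} (hα : 0 ≤ α) {j : ℕ} (hj : 1 ≤ j) (i : ℕ) :
    α ^ i * ((j - 1)! : ℝ) / (((j + i)! : ℝ) * ((j : ℝ) + (i : ℝ))) ≤
      α ^ i / (i ! : ℝ) * (1 / (j : ℝ) ^ 2) := by
  have hcomb :
      ((j - 1)! : ℝ) * (i ! : ℝ) * (j : ℝ) ^ 2 ≤ ((j + i)! : ℝ) * ((j : ℝ) + (i : ℝ)) := by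
    exact_mod_cast factorial_pred_mul_factorial_mul_sq_le hj i
  have hj₀ : (0 : ℝ) < j := by exact_mod_cast hj
  rw [_root_.div_mul_div_comm, mul_one, div_le_div_iff₀ (by positivity) (by positivity)]
  linear_combination mul_le_mul_of_nonneg_left hcomb (pow_nonneg hα i)

theorem tsum_pow_mul_factorial_pred_div_le {α : ℝ} (hα : 0 ≤ α) {j : ℕ} (hj : 1 ≤ j) :
    ∑' i : ℕ, α ^ i * ((j - 1)! : ℝ) / (((j + i)! : ℝ) * ((j : ℝ) + (i : ℝ))) ≤
      Real.exp α * (1 / (j : ℝ) ^ 2) := by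
  have hexp : HasSum (fun i : ℕ => α ^ i / (i ! : ℝ)) (Real.exp α) := by
    rw [Real.exp_eq_exp_ℝ]
    exact NormedSpace.expSeries_div_hasSum_exp α
  have hmajorant := hexp.mul_right (1 / (j : ℝ) ^ 2)
  have hbound := pow_mul_factorial_pred_div_le hα hj
  calc _ ≤ ∑' i : ℕ, α ^ i / (i ! : ℝ) * (1 / (j : ℝ) ^ 2) :=
        (hmajorant.summable.of_nonneg_of_le (fun i => by positivity) hbound).tsum_le_tsum hbound
          hmajorant.summable
    _ = Real.exp α * (1 / (j : ℝ) ^ 2) := hmajorant.tsum_eq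

theorem sum_Icc_one_div_sq_le_pi_sq_div_six (M : ℕ) :
    ∑ j ∈ Finset.Icc 1 M, 1 / (j : ℝ) ^ 2 ≤ Real.pi ^ 2 / 6 :=
  hasSum_zeta_two.tsum_eq ▸
    hasSum_zeta_two.summable.sum_le_tsum _ (fun _ _ => by positivity)

theorem expected_extinction_time_bound_general (α : ℝ) (hα : 0 < α) (M : ℕ) :
    ∑ j ∈ Finset.Icc 1 M, ∑' i : ℕ,
        α ^ i * (Nat.factorial (j - 1) : ℝ) /
          ((Nat.factorial (j + i) : ℝ) * ((j : ℝ) + (i : ℝ))) ≤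
      Real.exp α * (Real.pi ^ 2 / 6) :=
  calc _ ≤ ∑ j ∈ Finset.Icc 1 M, Real.exp α * (1 / (j : ℝ) ^ 2) :=
        Finset.sum_le_sum fun _ hj =>
          tsum_pow_mul_factorial_pred_div_le hα.le (Finset.mem_Icc.mp hj).1
    _ = Real.exp α * ∑ j ∈ Finset.Icc 1 M, 1 / (j : ℝ) ^ 2 := (Finset.mul_sum ..).symm
    _ ≤ Real.exp α * (Real.pi ^ 2 / 6) :=
        mul_le_mul_of_nonneg_left (sum_Icc_one_div_sq_le_pi_sq_div_six M) (Real.exp_pos α).le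

/-- The double series `∑_{j=1}^{M} ∑_{k=j-1}^{∞} α^{k-j+1} (j-1)! / ((k+1)! (k+1))`
is at most `e^α · π²/6`.  The inner series is reindexed by `k = j - 1 + i`, so the
term becomes `α^i (j-1)! / ((j+i)! (j+i))`. -/
theorem expected_extinction_time_bound (α : ℝ) (hα : 0 < α) (M : ℕ) (hM : 1 ≤ M) :
    ∑ j ∈ Finset.Icc 1 M, ∑' i : ℕ,
        α ^ i * (Nat.factorial (j - 1) : ℝ) /
          ((Nat.factorial (j + i) : ℝ) * ((j : ℝ) + (i : ℝ))) ≤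
      Real.exp α * (Real.pi ^ 2 / 6) :=
  expected_extinction_time_bound_general α hα M
end

section
/- For all natural numbers X and Y with X ≥ 3Y and Y ≥ 1, the regularized incomplete beta function at 3/4 satisfies I_{3/4}(X, Y) ≤ I_{3/4}(X+3, Y+1). -/
/-- The regularized incomplete beta function `I_z(a, b)` for natural parameters `a, b ≥ 1`,
defined via real integrals. -/
noncomputable def regIncBeta (z : ℝ) (a b : ℕ) : ℝ :=
  (∫ t in (0 : ℝ)..z, t ^ (a - 1) * (1 - t) ^ (b - 1)) /
  (∫ t in (0 : ℝ)..1, t ^ (a - 1) * (1 - t) ^ (b - 1))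

/-!
The Bernstein sum `F = ∑_{ν ≤ a} B_{a+b+1,ν}` has derivative `-(a+b+1) B_{a+b,a}`, a multiple of
`t^a (1-t)^b`, so `I_z(a+1, b+1) = 1 - F(z) = P(Bin(a+b+1, z) ≥ a+1)`.

Passing from `(X, Y)` to `(X+3, Y+1)` adds four trials. With `n = X+Y-1` and
`b_i = P(Bin(n, z) = X-1+i)`, four applications of Pascal's rule show that at `z = 3/4` the
probability grows by `(81 b₀ - 67 b₁ - 13 b₂ - b₃) / 256`. This is nonnegative because
`b_{j+1} / b_j = 3 (n - j) / (j + 1)`, so `X ≥ 3Y` makes `b₀ ≥ b₁ ≥ b₂ ≥ b₃`.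
-/

open Polynomial Finset

section CommRing

variable (R : Type*) [CommRing R]

/-- Evaluated at `z`, this is the probability that `Bin(n, z) < a`. -/
noncomputable def bernsteinSum (n a : ℕ) : R[X] :=
  ∑ ν ∈ range a, bernsteinPolynomial R n ν

variable {R}

theorem bernsteinSum_succ (n a : ℕ) :
    bernsteinSum R n (a + 1) = bernsteinSum R n a + bernsteinPolynomial R n a :=
  sum_range_succ _ _

theorem bernsteinPolynomial_succ_zero (n : ℕ) :
    bernsteinPolynomial R (n + 1) 0 = (1 - X) * bernsteinPolynomial R n 0 := by
  simp [bernsteinPolynomial, pow_succ, mul_comm]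

theorem bernsteinPolynomial_succ_succ (n ν : ℕ) :
    bernsteinPolynomial R (n + 1) (ν + 1) =
      X * bernsteinPolynomial R n ν + (1 - X) * bernsteinPolynomial R n (ν + 1) := by
  simp only [bernsteinPolynomial, Nat.choose_succ_succ', Nat.cast_add, Nat.add_sub_add_right]
  rcases lt_or_ge ν n with hν | hν
  · rw [show n - ν = n - (ν + 1) + 1 by omega]
    ring
  · rw [Nat.choose_eq_zero_of_lt (by omega : n < ν + 1), Nat.sub_eq_zero_of_le hν,
      Nat.sub_eq_zero_of_le (by omega : n ≤ ν + 1)]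
    ring

theorem bernsteinSum_succ_succ (n a : ℕ) :
    bernsteinSum R (n + 1) (a + 1) =
      X * bernsteinSum R n a + (1 - X) * bernsteinSum R n (a + 1) := by
  induction a with
  | zero => simp [bernsteinSum, bernsteinPolynomial_succ_zero]
  | succ a ih =>
    rw [bernsteinSum_succ, ih, bernsteinPolynomial_succ_succ, bernsteinSum_succ n (a + 1),
      bernsteinSum_succ n a]
    ring

theorem bernsteinSum_add_four (n a : ℕ) :
    bernsteinSum R (n + 4) (a + 4) =
      X ^ 4 * bernsteinSum R n a + 4 * X ^ 3 * (1 - X) * bernsteinSum R n (a + 1) +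
        6 * X ^ 2 * (1 - X) ^ 2 * bernsteinSum R n (a + 2) +
        4 * X * (1 - X) ^ 3 * bernsteinSum R n (a + 3) + (1 - X) ^ 4 * bernsteinSum R n (a + 4) := by
  linear_combination
    bernsteinSum_succ_succ (R := R) (n + 3) (a + 3) +
    X * bernsteinSum_succ_succ (R := R) (n + 2) (a + 2) +
    (1 - X) * bernsteinSum_succ_succ (R := R) (n + 2) (a + 3) +
    X ^ 2 * bernsteinSum_succ_succ (R := R) (n + 1) (a + 1) +
    2 * X * (1 - X) * bernsteinSum_succ_succ (R := R) (n + 1) (a + 2) +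
    (1 - X) ^ 2 * bernsteinSum_succ_succ (R := R) (n + 1) (a + 3) +
    X ^ 3 * bernsteinSum_succ_succ (R := R) n a +
    3 * X ^ 2 * (1 - X) * bernsteinSum_succ_succ (R := R) n (a + 1) +
    3 * X * (1 - X) ^ 2 * bernsteinSum_succ_succ (R := R) n (a + 2) +
    (1 - X) ^ 3 * bernsteinSum_succ_succ (R := R) n (a + 3)

theorem derivative_bernsteinSum (n a : ℕ) :
    derivative (bernsteinSum R (n + 1) (a + 1)) = -((n + 1) * bernsteinPolynomial R n a) := by
  induction a with
  | zero =>
    simp only [bernsteinSum, zero_add, range_one, sum_singleton,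
      bernsteinPolynomial.derivative_zero, add_tsub_cancel_right]
    push_cast
    ring
  | succ a ih =>
    rw [bernsteinSum_succ, derivative_add, ih, bernsteinPolynomial.derivative_succ]
    push_cast
    ring

theorem succ_mul_bernsteinPolynomial_succ (n ν : ℕ) :
    ((ν : R[X]) + 1) * (1 - X) * bernsteinPolynomial R n (ν + 1) =
      ((n - ν : ℕ) : R[X]) * X * bernsteinPolynomial R n ν := by
  simp only [bernsteinPolynomial]
  rcases lt_or_ge ν n with hν | hν
  · have hchoose := Nat.choose_succ_right_eq n ν
    rw [show n - ν = n - (ν + 1) + 1 by omega] at hchoose ⊢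
    have hchoose' := congrArg (Nat.cast : ℕ → R[X]) hchoose
    push_cast at hchoose' ⊢
    linear_combination (X ^ (ν + 1) * (1 - X) ^ (n - (ν + 1) + 1)) * hchoose'
  · simp [Nat.choose_eq_zero_of_lt (by omega : n < ν + 1), Nat.sub_eq_zero_of_le hν]

theorem bernsteinSum_eval_zero (n a : ℕ) : (bernsteinSum R n (a + 1)).eval 0 = 1 := by
  simp [bernsteinSum, eval_finsetSum, bernsteinPolynomial.eval_at_0]

theorem bernsteinSum_eval_one {n a : ℕ} (h : a ≤ n) : (bernsteinSum R n a).eval 1 = 0 := by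
  refine (eval_finsetSum _ _ _).trans (sum_eq_zero fun ν hν => ?_)
  rw [bernsteinPolynomial.eval_at_1, if_neg (by simp at hν; omega)]

end CommRing

theorem bernsteinPolynomial_eval_succ_le {n ν : ℕ} {z : ℝ} (hz₀ : 0 ≤ z) (hz₁ : z < 1)
    (h : z * (n - ν : ℕ) ≤ (1 - z) * (ν + 1)) :
    (bernsteinPolynomial ℝ n (ν + 1)).eval z ≤ (bernsteinPolynomial ℝ n ν).eval z := by
  have hratio := congrArg (eval z) (succ_mul_bernsteinPolynomial_succ (R := ℝ) n ν)
  simp only [eval_mul, eval_add, eval_sub, eval_one, eval_X, eval_natCast] at hratio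
  have hpos : 0 < ((ν : ℝ) + 1) * (1 - z) := by
    have : (0 : ℝ) < 1 - z := by linarith
    positivity
  have hnonneg : 0 ≤ (bernsteinPolynomial ℝ n ν).eval z := by
    simp only [bernsteinPolynomial, eval_mul, eval_pow, eval_sub, eval_one, eval_X, eval_natCast]
    have : (0 : ℝ) ≤ 1 - z := by linarith
    positivity
  refine le_of_mul_le_mul_left ?_ hpos
  rw [hratio]
  nlinarith

theorem integral_pow_mul_one_sub_pow (a b : ℕ) (z : ℝ) :
    ∫ t in (0 : ℝ)..z, t ^ a * (1 - t) ^ b =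
      (1 - (bernsteinSum ℝ (a + b + 1) (a + 1)).eval z) / ((a + b + 1) * (a + b).choose a) := by
  set c : ℝ := (a + b + 1) * (a + b).choose a
  have hc : c ≠ 0 := by
    have := Nat.choose_pos (Nat.le_add_right a b)
    positivity
  have hderiv (t : ℝ) : HasDerivAt (fun t => -(bernsteinSum ℝ (a + b + 1) (a + 1)).eval t / c)
      (t ^ a * (1 - t) ^ b) t := by
    refine (((bernsteinSum ℝ (a + b + 1) (a + 1)).hasDerivAt t).neg.div_const c).congr_deriv ?_
    rw [derivative_bernsteinSum]
    simp only [bernsteinPolynomial, eval_neg, eval_mul, eval_pow, eval_sub, eval_one, eval_X,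
      eval_natCast, eval_add, Nat.add_sub_cancel_left]
    field_simp
    push_cast
    ring
  rw [intervalIntegral.integral_eq_sub_of_hasDerivAt (fun t _ => hderiv t)
    (by apply Continuous.intervalIntegrable; fun_prop), bernsteinSum_eval_zero]
  ring

theorem regIncBeta_succ_succ (z : ℝ) (a b : ℕ) :
    regIncBeta z (a + 1) (b + 1) = 1 - (bernsteinSum ℝ (a + b + 1) (a + 1)).eval z := by
  have hchoose : ((a + b).choose a : ℝ) ≠ 0 :=
    Nat.cast_ne_zero.mpr (Nat.choose_pos (Nat.le_add_right a b)).ne'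
  simp only [regIncBeta, Nat.add_sub_cancel, integral_pow_mul_one_sub_pow]
  rw [bernsteinSum_eval_one (by omega : a + 1 ≤ a + b + 1), sub_zero]
  field_simp

theorem bernsteinSum_add_four_eval_le {n a : ℕ} (h : 3 * (n - a) ≤ a + 1) :
    (bernsteinSum ℝ (n + 4) (a + 4)).eval (3 / 4) ≤ (bernsteinSum ℝ n (a + 1)).eval (3 / 4) := by
  have hmono (ν : ℕ) (hν : a ≤ ν) :
      (bernsteinPolynomial ℝ n (ν + 1)).eval (3 / 4) ≤ (bernsteinPolynomial ℝ n ν).eval (3 / 4) := by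
    refine bernsteinPolynomial_eval_succ_le (by norm_num) (by norm_num) ?_
    have : (3 : ℝ) * (n - ν : ℕ) ≤ ν + 1 := by exact_mod_cast (by omega : 3 * (n - ν) ≤ ν + 1)
    linarith
  have h₀ : (bernsteinPolynomial ℝ n (a + 1)).eval (3 / 4) ≤
      (bernsteinPolynomial ℝ n a).eval (3 / 4) := hmono a le_rfl
  have h₁ : (bernsteinPolynomial ℝ n (a + 2)).eval (3 / 4) ≤
      (bernsteinPolynomial ℝ n (a + 1)).eval (3 / 4) := hmono (a + 1) (by omega)
  have h₂ : (bernsteinPolynomial ℝ n (a + 3)).eval (3 / 4) ≤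
      (bernsteinPolynomial ℝ n (a + 2)).eval (3 / 4) := hmono (a + 2) (by omega)
  rw [bernsteinSum_add_four]
  simp only [bernsteinSum_succ, eval_add, eval_mul, eval_pow, eval_sub, eval_one, eval_X,
    eval_ofNat]
  norm_num
  linarith

/-- `I_{3/4}` is non-decreasing along the discretized line of slope `1/3`:
if `X ≥ 3Y` and `Y ≥ 1`, then `I_{3/4}(X, Y) ≤ I_{3/4}(X+3, Y+1)`. -/
theorem beta_increasing_along_line (X Y : ℕ) (hY : 1 ≤ Y) (hXY : 3 * Y ≤ X) :
    regIncBeta (3 / 4) X Y ≤ regIncBeta (3 / 4) (X + 3) (Y + 1) := by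
  obtain ⟨a, rfl⟩ : ∃ a, X = a + 1 := ⟨X - 1, by omega⟩
  obtain ⟨b, rfl⟩ : ∃ b, Y = b + 1 := ⟨Y - 1, by omega⟩
  have key := bernsteinSum_add_four_eval_le (n := a + b + 1) (a := a) (by omega)
  rw [show a + 1 + 3 = a + 3 + 1 by ring, regIncBeta_succ_succ, regIncBeta_succ_succ,
    show a + 3 + (b + 1) + 1 = a + b + 1 + 4 by ring, show a + 3 + 1 = a + 4 by ring]
  linarith
end
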